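/- arXiv:0801.3893 — 2 statements merged into one kernel-verified Lean document; each statement's English description precedes it below -/
import Mathlib

section
/- Let b be a positive integer, let n_1, …, n_s be pairwise distinct positive integers each coprime to b, let k_1, …, k_s be positive integers, and set f(q) := ∏_{i=1}^s Φ_{n_i}(q)^{k_i}. Then the substitution q ↦ q^b induces a well-defined ring endomorphism of ℤ[1/b][q]/(f(q)) (since f(q) divides f(q^b) in ℤ[1/b][q]), and this endomorphism is a ring isomorphism. -/
/-!
Let `x` be the class of `q` in `A = R[q]/(f)` and `m = ∏ nᵢ`. Since `f` divides a power of
`q^m - 1`, the element `t = x^m` is unipotent. The image `S` of `q ↦ q^b` contains `x^b` and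
`t^b`. As `b` is invertible, Hensel's lemma for the nilpotent ideal `(t^b - 1)` of `S` yields a
unipotent `b`-th root of `t^b` in `S`; unipotent `b`-th roots are unique, so `t ∈ S`, and `t` is a
unit of `S`. Together with `x^b ∈ S` and `gcd(b, m) = 1` this gives `x ∈ S`, so the endomorphism
is surjective, and a surjective endomorphism of the finite `R`-module `A` is bijective.
-/

open Polynomial

theorem Nat.Coprime.exists_pow_totient_eq_one_add_mul {b m : ℕ} (hb : 0 < b)
    (h : b.Coprime m) : ∃ c, b ^ m.totient = 1 + c * m := by
  obtain ⟨c, hc⟩ :=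
    (Nat.modEq_iff_dvd' (Nat.one_le_pow _ _ hb)).mp (Nat.ModEq.pow_totient h).symm
  exact ⟨c, by rw [mul_comm, ← hc, Nat.add_sub_cancel' (Nat.one_le_pow _ _ hb)]⟩

theorem Submonoid.mem_of_pow_mem_of_coprime {M : Type*} [CommMonoid M] (S : Submonoid M)
    {x y : M} {b m : ℕ} (hb : 0 < b) (hm : 0 < m) (hcop : b.Coprime m)
    (hxb : x ^ b ∈ S) (hy : y ∈ S) (hxy : x ^ m * y = 1) : x ∈ S := by
  obtain ⟨c, hc⟩ := hcop.exists_pow_totient_eq_one_add_mul hb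
  have hx : x = (x ^ b) ^ b ^ (m.totient - 1) * y ^ c := by
    rw [← pow_mul, ← pow_succ', Nat.sub_add_cancel (Nat.totient_pos.mpr hm), hc, pow_add,
      pow_one, pow_mul', mul_assoc, ← mul_pow, hxy, one_pow, mul_one]
  rw [hx]
  exact mul_mem (pow_mem hxb _) (pow_mem hy _)

theorem Ideal.isAdicComplete_of_pow_eq_bot {R : Type*} [CommRing R] {I : Ideal R} {N : ℕ}
    (h : I ^ N = ⊥) : IsAdicComplete I R := by
  refine { haus' := fun x hx => ?_, prec' := fun f hf => ⟨f N, fun n => ?_⟩ }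
  · simpa [h, SModEq.sub_mem] using hx N
  · rcases le_total n N with hn | hn
    · exact hf hn
    · have hfn : f N = f n := by simpa [h, SModEq.sub_mem, sub_eq_zero] using hf hn
      rw [hfn]

section Unipotent

variable {A : Type*} [CommRing A] {b : ℕ}

theorem exists_one_add_pow_eq_one_add_mul (d : A) (m : ℕ) :
    ∃ s, (1 + d) ^ m = 1 + d * (m + d * s) := by
  induction m with
  | zero => exact ⟨0, by simp⟩
  | succ m ih =>
    obtain ⟨s, hs⟩ := ih
    exact ⟨m + s + s * d, by rw [pow_succ, hs]; push_cast; ring⟩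

theorem eq_one_of_pow_eq_one_of_isNilpotent_sub_one (hb : IsUnit (b : A)) {a : A}
    (ha : IsNilpotent (a - 1)) (h : a ^ b = 1) : a = 1 := by
  obtain ⟨s, hs⟩ := exists_one_add_pow_eq_one_add_mul (a - 1) b
  have hunit : IsUnit ((b : A) + (a - 1) * s) :=
    (Commute.all _ _).isNilpotent_mul_right ha |>.isUnit_add_left_of_commute hb (Commute.all _ _)
  rw [add_sub_cancel, h, left_eq_add] at hs
  simpa [sub_eq_zero] using hunit.mul_left_eq_zero.mp hs

theorem eq_of_pow_eq_of_isNilpotent_sub_one (hb : IsUnit (b : A)) {a a' : A}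
    (ha : IsNilpotent (a - 1)) (ha' : IsNilpotent (a' - 1)) (h : a ^ b = a' ^ b) : a = a' := by
  obtain ⟨u, rfl⟩ : IsUnit a' := by simpa using ha'.isUnit_one_add
  have hq : IsNilpotent (a * ↑u⁻¹ - 1) := by
    have : a * ↑u⁻¹ - 1 = (a - 1 - (u - 1)) * ↑u⁻¹ := by
      rw [sub_sub_sub_cancel_right, sub_mul, u.mul_inv]
    rw [this]
    exact (Commute.all _ _).isNilpotent_mul_right ((Commute.all _ _).isNilpotent_sub ha ha')
  have hq1 : a * ↑u⁻¹ = 1 := eq_one_of_pow_eq_one_of_isNilpotent_sub_one hb hq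
    (by rw [mul_pow, h, ← mul_pow, u.mul_inv, one_pow])
  simpa using congrArg (· * (u : A)) hq1

theorem exists_pow_eq_of_isNilpotent_sub_one (hb : 0 < b) (hbA : IsUnit (b : A)) {z : A}
    (hz : IsNilpotent (z - 1)) : ∃ a : A, a ^ b = z ∧ IsNilpotent (a - 1) := by
  obtain ⟨N, hN⟩ := hz
  let I := Ideal.span {z - 1}
  have : IsAdicComplete I A := Ideal.isAdicComplete_of_pow_eq_bot
    (by rw [Ideal.span_singleton_pow, hN, Ideal.span_singleton_eq_bot])
  obtain ⟨a, ha, haI⟩ := HenselianRing.is_henselian (I := I) (X ^ b - C z)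
    (monic_X_pow_sub_C z hb.ne') 1 (Ideal.mem_span_singleton'.mpr ⟨-1, by simp⟩)
    (by simpa [derivative_X_pow] using hbA.map (Ideal.Quotient.mk I))
  refine ⟨a, by simpa [sub_eq_zero] using ha, ?_⟩
  obtain ⟨c, hc⟩ := Ideal.mem_span_singleton'.mp haI
  rw [← hc]
  exact (Commute.all _ _).isNilpotent_mul_left ⟨N, hN⟩

theorem Subring.exists_mul_eq_one_of_isNilpotent_sub_one (S : Subring A) {t : A} (htS : t ∈ S)
    (ht : IsNilpotent (t - 1)) : ∃ y ∈ S, t * y = 1 := by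
  have hs : IsNilpotent (⟨t - 1, sub_mem htS (one_mem S)⟩ : S) :=
    (IsNilpotent.map_iff (f := S.subtype) Subtype.val_injective).mp ht
  obtain ⟨u, hu⟩ := hs.isUnit_one_add
  refine ⟨(↑u⁻¹ : S), Subtype.mem _, ?_⟩
  simpa [hu] using congrArg S.subtype u.mul_inv

theorem Subalgebra.mem_of_pow_mem_of_isNilpotent_sub_one {R : Type*} [CommRing R] [Algebra R A]
    (S : Subalgebra R A) (hb : 0 < b) (hbR : IsUnit (b : R)) {t : A}
    (ht : IsNilpotent (t - 1)) (htb : t ^ b ∈ S) : t ∈ S := by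
  have hbS : IsUnit (b : S) := by simpa using hbR.map (algebraMap R S)
  have hbA : IsUnit (b : A) := by simpa using hbR.map (algebraMap R A)
  have hz : IsNilpotent ((⟨t ^ b, htb⟩ : S) - 1) := by
    rw [← IsNilpotent.map_iff (f := S.val) Subtype.val_injective]
    obtain ⟨c, hc⟩ := sub_one_dvd_pow_sub_one t b
    simpa [hc] using (Commute.all _ _).isNilpotent_mul_right ht
  obtain ⟨a, hab, ha⟩ := exists_pow_eq_of_isNilpotent_sub_one hb hbS hz
  have hat : (a : A) = t := eq_of_pow_eq_of_isNilpotent_sub_one hbA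
    (by simpa using ha.map S.val) ht (by simpa using congrArg S.val hab)
  exact hat ▸ a.2

end Unipotent

theorem cyclotomic_dvd_expand_of_coprime (R : Type*) [CommRing R] {n b : ℕ} (hb : 0 < b)
    (h : n.Coprime b) : cyclotomic n R ∣ expand R b (cyclotomic n R) := by
  induction b using Nat.recOnMul with
  | zero => exact absurd hb (lt_irrefl 0)
  | one => rw [expand_one]
  | prime p hp =>
    have hpn : ¬p ∣ n := fun hpn => hp.one_lt.ne' (Nat.eq_one_of_dvd_coprimes h hpn dvd_rfl)
    rw [cyclotomic_expand_eq_cyclotomic_mul hp hpn]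
    exact dvd_mul_left _ _
  | mul a c iha ihc =>
    have ha := iha (Nat.pos_of_mul_pos_right hb) h.coprime_mul_right_right
    have hc := ihc (Nat.pos_of_mul_pos_left hb) h.coprime_mul_left_right
    have hac := map_dvd (expand R a) hc
    rw [expand_mul]
    exact dvd_trans ha hac

theorem cyclotomic_dvd_X_pow_sub_one_of_dvd (R : Type*) [CommRing R] {n m : ℕ} (h : n ∣ m) :
    cyclotomic n R ∣ X ^ m - 1 := by
  obtain ⟨t, rfl⟩ := h
  exact (cyclotomic.dvd_X_pow_sub_one n R).trans (pow_one_sub_dvd_pow_mul_sub_one X n t)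

section ExpandQuotient

variable {R : Type*} [CommRing R] {f : R[X]} {b : ℕ}

theorem span_le_comap_expand (h : f ∣ expand R b f) :
    Ideal.span {f} ≤ (Ideal.span {f}).comap (expand R b) := by
  rwa [Ideal.span_le, Set.singleton_subset_iff, SetLike.mem_coe, Ideal.mem_comap,
    Ideal.mem_span_singleton]

noncomputable def expandQuotient (h : f ∣ expand R b f) :
    (R[X] ⧸ Ideal.span {f}) →ₐ[R] R[X] ⧸ Ideal.span {f} :=
  Ideal.quotientMapₐ _ (expand R b) (span_le_comap_expand h)

theorem expandQuotient_mk_X (h : f ∣ expand R b f) :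
    expandQuotient h (Ideal.Quotient.mk _ X) = Ideal.Quotient.mk _ X ^ b := by
  rw [expandQuotient, Ideal.quotient_map_mkₐ, expand_X, map_pow]
  rfl

theorem expandQuotient_bijective (hf : f.Monic) (hb : 0 < b) (hbR : IsUnit (b : R))
    {m K : ℕ} (hm : 0 < m) (hcop : b.Coprime m) (hdvd : f ∣ expand R b f)
    (hfm : f ∣ (X ^ m - 1) ^ K) : Function.Bijective (expandQuotient hdvd) := by
  set F := expandQuotient hdvd
  have : Module.Finite R (R[X] ⧸ Ideal.span {f}) := hf.finite_quotient
  suffices hsurj : Function.Surjective F from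
    ⟨OrzechProperty.injective_of_surjective_endomorphism F.toLinearMap hsurj, hsurj⟩
  set x := Ideal.Quotient.mk (Ideal.span {f}) X
  have hxb : x ^ b ∈ F.range := ⟨x, expandQuotient_mk_X hdvd⟩
  have ht : IsNilpotent (x ^ m - 1) := by
    refine ⟨K, ?_⟩
    rw [← map_one (Ideal.Quotient.mk _), ← map_pow, ← map_sub, ← map_pow,
      Ideal.Quotient.eq_zero_iff_mem, Ideal.mem_span_singleton]
    exact hfm
  have htS : x ^ m ∈ F.range := F.range.mem_of_pow_mem_of_isNilpotent_sub_one hb hbR ht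
    (by rw [← pow_mul, mul_comm, pow_mul]; exact pow_mem hxb m)
  obtain ⟨y, hyS, hxy⟩ := F.range.toSubring.exists_mul_eq_one_of_isNilpotent_sub_one htS ht
  have hxS : x ∈ F.range := F.range.toSubmonoid.mem_of_pow_mem_of_coprime hb hm hcop hxb hyS hxy
  rw [← AlgHom.range_eq_top, eq_top_iff]
  exact (AdjoinRoot.adjoinRoot_eq_top (f := f)).ge.trans
    (Algebra.adjoin_le (Set.singleton_subset_iff.mpr hxS))

end ExpandQuotient

theorem stmt7_general (b s : ℕ) (hb : 0 < b) (n : Fin s → ℕ) (k : Fin s → ℕ)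
    (hn : ∀ i, 0 < n i) (hcop : ∀ i, Nat.Coprime (n i) b)
    (R : Type*) [CommRing R] [IsLocalization.Away ((b : ℤ)) R] :
    ∃ F : (Polynomial R ⧸ Ideal.span {∏ i : Fin s, cyclotomic (n i) R ^ k i}) →+*
          (Polynomial R ⧸ Ideal.span {∏ i : Fin s, cyclotomic (n i) R ^ k i}),
      F (Ideal.Quotient.mk (Ideal.span {∏ i : Fin s, cyclotomic (n i) R ^ k i}) X) =
          (Ideal.Quotient.mk (Ideal.span {∏ i : Fin s, cyclotomic (n i) R ^ k i}) X) ^ b ∧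
      Function.Bijective F := by
  set f := ∏ i : Fin s, cyclotomic (n i) R ^ k i
  have hbR : IsUnit (b : R) := by
    simpa using IsLocalization.Away.algebraMap_isUnit (R := ℤ) (S := R) (b : ℤ)
  have hf : f.Monic := monic_prod_of_monic _ _ fun i _ => (cyclotomic.monic _ _).pow _
  have hdvd : f ∣ expand R b f := by
    simp only [f, map_prod, map_pow]
    exact Finset.prod_dvd_prod_of_dvd _ _ fun i _ =>
      pow_dvd_pow_of_dvd (cyclotomic_dvd_expand_of_coprime R hb (hcop i)) _
  have hfm : f ∣ (X ^ ∏ i, n i - 1) ^ ∑ i, k i := by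
    rw [← Finset.prod_pow_eq_pow_sum]
    exact Finset.prod_dvd_prod_of_dvd _ _ fun i _ => pow_dvd_pow_of_dvd
      (cyclotomic_dvd_X_pow_sub_one_of_dvd R (Finset.dvd_prod_of_mem n (Finset.mem_univ i))) _
  exact ⟨(expandQuotient hdvd).toRingHom, expandQuotient_mk_X hdvd,
    expandQuotient_bijective hf hb hbR (Finset.prod_pos fun i _ => hn i)
      (Nat.Coprime.prod_right fun i _ => (hcop i).symm) hdvd hfm⟩

/-- Let `b` be positive, `n 0, …, n (s-1)` pairwise distinct positive integers coprime to `b`,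
`k i` positive integers, and `f = ∏ Φ_{n i}^{k i}`.  Then the substitution `q ↦ q^b` induces a
well-defined ring endomorphism of `ℤ[1/b][q]/(f)`, and it is a ring isomorphism.
Here `R` is the localization `ℤ[1/b]` of `ℤ` away from `b`. -/
theorem stmt7 (b s : ℕ) (hb : 0 < b) (n : Fin s → ℕ) (k : Fin s → ℕ)
    (hn : ∀ i, 0 < n i) (hk : ∀ i, 0 < k i)
    (hinj : Function.Injective n) (hcop : ∀ i, Nat.Coprime (n i) b)
    (R : Type*) [CommRing R] [IsLocalization.Away ((b : ℤ)) R] :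
    ∃ F : (Polynomial R ⧸ Ideal.span {∏ i : Fin s, cyclotomic (n i) R ^ k i}) →+*
          (Polynomial R ⧸ Ideal.span {∏ i : Fin s, cyclotomic (n i) R ^ k i}),
      F (Ideal.Quotient.mk (Ideal.span {∏ i : Fin s, cyclotomic (n i) R ^ k i}) X) =
          (Ideal.Quotient.mk (Ideal.span {∏ i : Fin s, cyclotomic (n i) R ^ k i}) X) ^ b ∧
      Function.Bijective F :=
  stmt7_general b s hb n k hn hcop R
end

section
/- Let r be an odd positive integer, let ξ ∈ ℂ be a primitive r-th root of unity, and let b be a nonzero integer. Then the Gauss sum γ_b(ξ) := Σ over odd integers n with 0 < n < 2r of ξ^{b(n²−1)/4} is nonzero. -/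
/-!
Writing `n = 2k + 1` turns the exponent into `b k (k + 1)`, so the sum is
`∑_{x : ZMod r} ψ (b x (x + 1))` for the primitive additive character `ψ x = ξ ^ x`.
Multiplying by `∑_y ψ (-b y (y + 1))` and substituting `x = y + t`, the inner sum over `y` is the
character sum `∑_y ψ (2 b t y)`, which vanishes unless `2 b t = 0`. As `2` is invertible mod `r`,
those `t` have `b t = 0` and contribute `r` each, so the product is a positive multiple of `r`.
-/

open Finset

namespace AddChar

variable {R R' : Type*} [CommRing R] [Fintype R] [CommRing R']

lemma sum_mul_sum_neg_eq_sum_mul_sum_mulShift (ψ : AddChar R R') (a d : R) :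
    (∑ x, ψ (a * x * (x + d))) * ∑ y, ψ (-(a * y * (y + d))) =
      ∑ t, ψ (a * t * (t + d)) * ∑ y, ψ (y * (2 * a * t)) := by
  rw [sum_mul_sum, sum_comm]
  calc ∑ y, ∑ x, ψ (a * x * (x + d)) * ψ (-(a * y * (y + d)))
      = ∑ y, ∑ t, ψ (a * (y + t) * (y + t + d)) * ψ (-(a * y * (y + d))) :=
        sum_congr rfl fun y _ => (Equiv.sum_comp (Equiv.addLeft y) _).symm
    _ = ∑ y, ∑ t, ψ (a * t * (t + d)) * ψ (y * (2 * a * t)) := by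
        refine sum_congr rfl fun y _ => sum_congr rfl fun t _ => ?_
        rw [← map_add_eq_mul, ← map_add_eq_mul]
        ring_nf
    _ = ∑ t, ψ (a * t * (t + d)) * ∑ y, ψ (y * (2 * a * t)) := by
        rw [sum_comm]
        simp only [mul_sum]

lemma sum_mul_mul_add_ne_zero [DecidableEq R] [IsDomain R'] [CharZero R'] {ψ : AddChar R R'}
    (hψ : IsPrimitive ψ) (h2 : IsUnit (2 : R)) (a d : R) :
    ∑ x, ψ (a * x * (x + d)) ≠ 0 := by
  intro hsum
  have hdiff := sum_mul_sum_neg_eq_sum_mul_sum_mulShift ψ a d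
  have hterm (t : R) : ψ (a * t * (t + d)) * ∑ y, ψ (y * (2 * a * t)) =
      if 2 * a * t = 0 then (Fintype.card R : R') else 0 := by
    rw [sum_mulShift _ hψ]
    split_ifs with ht
    · have hat : a * t = 0 := by
        rwa [mul_assoc, h2.mul_right_eq_zero] at ht
      rw [hat, zero_mul, map_zero_eq_one, one_mul]
    · rw [Nat.cast_zero, mul_zero]
  simp only [hterm, sum_ite, sum_const_zero, add_zero, sum_const, nsmul_eq_mul, hsum,
    zero_mul] at hdiff
  have hzero : (0 : R) ∈ univ.filter fun t => 2 * a * t = 0 := by simp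
  exact mul_ne_zero (Nat.cast_ne_zero.mpr (card_ne_zero_of_mem hzero))
    (Nat.cast_ne_zero.mpr Fintype.card_ne_zero) hdiff.symm

lemma zmodChar_intCast {C : Type*} [DivisionCommMonoid C] {n : ℕ} [NeZero n] {ζ : C}
    (hζ : ζ ^ n = 1) (m : ℤ) :
    zmodChar n hζ m = ζ ^ m := by
  rw [← zsmul_one, map_zsmul_eq_zpow, ← Nat.cast_one, zmodChar_apply', pow_one]

end AddChar

lemma ZMod.sum_univ_eq_sum_range {M : Type*} [AddCommMonoid M] (n : ℕ) [NeZero n]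
    (f : ZMod n → M) : ∑ x, f x = ∑ k ∈ range n, f k := by
  obtain ⟨m, rfl⟩ : ∃ m, n = m + 1 := Nat.exists_eq_add_one.mpr (NeZero.pos n)
  rw [← Fin.sum_univ_eq_sum_range (fun k => f k)]
  exact sum_congr rfl fun i _ => congrArg f (ZMod.natCast_zmod_val i).symm

lemma Finset.sum_filter_odd_Ico_eq_sum_range {M : Type*} [AddCommMonoid M] (f : ℕ → M)
    (r : ℕ) : ∑ n ∈ (Ico 1 (2 * r)).filter Odd, f n = ∑ k ∈ range r, f (2 * k + 1) := by
  symm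
  refine sum_nbij' (fun k => 2 * k + 1) (fun n => n / 2) ?_ ?_ ?_ ?_ fun _ _ => rfl
  · intro k hk
    rw [mem_range] at hk
    exact mem_filter.mpr ⟨mem_Ico.mpr ⟨by omega, by omega⟩, odd_two_mul_add_one k⟩
  · intro n hn
    obtain ⟨hn, k, rfl⟩ := mem_filter.mp hn
    rw [mem_Ico] at hn
    exact mem_range.mpr (by omega)
  · intro k _
    omega
  · intro n hn
    obtain ⟨-, k, rfl⟩ := mem_filter.mp hn
    omega

lemma Int.mul_sq_sub_one_ediv_four (b k : ℤ) : b * ((2 * k + 1) ^ 2 - 1) / 4 = b * k * (k + 1) :=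
  Int.ediv_eq_of_eq_mul_left (by norm_num) (by ring)

theorem stmt13_general (r : ℕ) (hrodd : Odd r)
    (ξ : ℂ) (hξ : IsPrimitiveRoot ξ r) (b : ℤ) :
    ∑ n ∈ (Finset.Ico 1 (2 * r)).filter (fun n => Odd n),
        ξ ^ ((b * ((n : ℤ) ^ 2 - 1)) / 4) ≠ 0 := by
  have : NeZero r := ⟨hrodd.pos.ne'⟩
  have h2 : IsUnit (2 : ZMod r) := by
    exact_mod_cast (ZMod.isUnit_iff_coprime 2 r).mpr (Nat.coprime_two_left.mpr hrodd)
  have hψ := AddChar.zmodChar_primitive_of_primitive_root r hξ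
  convert AddChar.sum_mul_mul_add_ne_zero hψ h2 (b : ZMod r) 1 using 1
  rw [sum_filter_odd_Ico_eq_sum_range, ZMod.sum_univ_eq_sum_range]
  refine sum_congr rfl fun k _ => ?_
  have hcast : (b : ZMod r) * k * (k + 1) = ((b * k * (k + 1) : ℤ) : ZMod r) := by push_cast; ring
  rw [hcast, AddChar.zmodChar_intCast]
  push_cast
  rw [Int.mul_sq_sub_one_ediv_four]

/-- For `ξ` a primitive `r`-th root of unity with `r` odd and `b ≠ 0`, the Gauss sum
`γ_b(ξ) = ∑_{n odd, 0<n<2r} ξ^{b(n²-1)/4}` is nonzero. -/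
theorem stmt13 (r : ℕ) (hrpos : 0 < r) (hrodd : Odd r)
    (ξ : ℂ) (hξ : IsPrimitiveRoot ξ r) (b : ℤ) (hb : b ≠ 0) :
    ∑ n ∈ (Finset.Ico 1 (2 * r)).filter (fun n => Odd n),
        ξ ^ ((b * ((n : ℤ) ^ 2 - 1)) / 4) ≠ 0 :=
  stmt13_general r hrodd ξ hξ b
end
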